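/- Let Ω_1,…,Ω_r ∈ Mat_n(ℂ[ħ][[q]]) be flat with p_a := Ω_a|_{q=0} ∈ Mat_n(ℂ) independent of ħ. Assume in addition there are μ ∈ Mat_n(ℂ) and integers w_1,…,w_r such that, with the Euler operator E := 2ħ·∂/∂ħ + Σ_b w_b·θ_b acting entrywise, E(Ω_a) + μΩ_a − Ω_aμ = 2Ω_a for every a. Then the unique matrix S ∈ Mat_n(ℂ[ħ,ħ^{-1}]][[q]]) with S|_{q=0} = Id and ħθ_a S + Ω_a S − S p_a = 0 for all a satisfies E(S) + μS − Sμ = 0; moreover every q-coefficient of S is a Laurent polynomial in ħ, i.e. S ∈ Mat_n(ℂ[ħ,ħ^{-1}][[q]]). -/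

import Mathlib

/-!
Work over ℂ.  We represent the coefficient ring `ℂ[ħ,ħ⁻¹]]` (formal Laurent
series `Σ_{k ≤ K} c_k ħ^k` with finitely many positive powers of `ħ`) as
`LaurentSeries ℂ` in the variable `t = ħ⁻¹`; thus the coefficient of `t^k`
is the coefficient of `ħ^{-k}`.  `AA r = ℂ[ħ,ħ⁻¹]][[q¹,…,qʳ]]`, and
`θ_a = qᵃ·∂/∂qᵃ` is the logarithmic partial derivative.
-/

noncomputable section

/-- `ℂ[ħ,ħ⁻¹]]`, realized as Laurent series in `t = ħ⁻¹`. -/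
abbrev LS := LaurentSeries ℂ

/-- `ħ = t⁻¹` where `t` is the `LaurentSeries` variable. -/
def hbarL : LS := HahnSeries.single (-1 : ℤ) (1 : ℂ)

/-- `ℂ[ħ,ħ⁻¹]][[q¹,…,qʳ]]`. -/
abbrev AA (r : ℕ) := MvPowerSeries (Fin r) LS

/-- The logarithmic derivative `θ_a = qᵃ ∂/∂qᵃ`:
on the monomial `q^d` it acts by multiplication by `d a`. -/
def thetaA {r : ℕ} (a : Fin r) (x : AA r) : AA r := fun d => (d a : LS) * x d

/-- `θ_a` acting entrywise on matrices. -/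
def thetaMat {r n : ℕ} (a : Fin r) (M : Matrix (Fin n) (Fin n) (AA r)) :
    Matrix (Fin n) (Fin n) (AA r) :=
  Matrix.of fun i j => thetaA a (M i j)

/-- `ħ` as an element of `ℂ[ħ,ħ⁻¹]][[q]]`. -/
def hbarA (r : ℕ) : AA r := MvPowerSeries.C (σ := Fin r) (R := LS) hbarL

/-- The constant term at `q = 0`. -/
def ccA {r : ℕ} : AA r →+* LS := MvPowerSeries.constantCoeff (σ := Fin r) (R := LS)

/-- The embedding `ℂ → ℂ[ħ,ħ⁻¹]][[q]]`. -/
def cA (r : ℕ) : ℂ →+* AA r := (MvPowerSeries.C (σ := Fin r) (R := LS)).comp HahnSeries.C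

/-- `x ∈ ℂ[ħ]`: `x` is a polynomial in `ħ` (no negative powers of `ħ`,
i.e. no positive powers of `t`; finiteness is automatic for Laurent series). -/
def isPolyH (x : LS) : Prop := ∀ k : ℤ, 0 < k → x.coeff k = 0

/-- `x ∈ ℂ[[ħ⁻¹]]`: `x` is regular at `ħ = ∞` (no positive powers of `ħ`). -/
def isRegH (x : LS) : Prop := ∀ k : ℤ, k < 0 → x.coeff k = 0

/-- `x ∈ ℂ`: `x` is a constant, independent of `ħ`. -/
def isConstH (x : LS) : Prop := ∀ k : ℤ, k ≠ 0 → x.coeff k = 0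

/-- A matrix over `ℂ[ħ,ħ⁻¹]][[q]]` has entries in `ℂ[ħ][[q]]`. -/
def MatPolyH {r n : ℕ} (M : Matrix (Fin n) (Fin n) (AA r)) : Prop :=
  ∀ i j d, isPolyH (M i j d)

/-- A matrix over `ℂ[ħ,ħ⁻¹]][[q]]` has entries in `ℂ[[ħ⁻¹]][[q]]`. -/
def MatRegH {r n : ℕ} (M : Matrix (Fin n) (Fin n) (AA r)) : Prop :=
  ∀ i j d, isRegH (M i j d)

/-- A matrix over `ℂ[ħ,ħ⁻¹]][[q]]` has entries in `ℂ[[q]]`,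
i.e. is independent of `ħ`. -/
def MatConstH {r n : ℕ} (M : Matrix (Fin n) (Fin n) (AA r)) : Prop :=
  ∀ i j d, isConstH (M i j d)

/-- Flatness: `ħ(θ_aΩ_b − θ_bΩ_a) + Ω_aΩ_b − Ω_bΩ_a = 0` for all `a, b`. -/
def IsFlat {r n : ℕ} (Ω : Fin r → Matrix (Fin n) (Fin n) (AA r)) : Prop :=
  ∀ a b, hbarA r • (thetaMat a (Ω b) - thetaMat b (Ω a)) + (Ω a * Ω b - Ω b * Ω a) = 0

/-- Diagonal rescaling of a Laurent series: the coefficient of `ħ^{-k}`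
is multiplied by `f k`. -/
def scaleL (f : ℤ → ℂ) (x : LS) : LS :=
  ⟨fun k => f k * x.coeff k,
   x.isPWO_support'.mono (fun k hk => by
     simp only [Function.mem_support, ne_eq] at hk ⊢
     exact fun h => hk (by rw [h, mul_zero]))⟩

/-- Euler operator `E = 2ħ·∂/∂ħ + Σ_b w_b·θ_b`: on the monomial `ħ^j q^d`
(`= t^{-j} q^d`) it acts by multiplication by `2j + Σ_b w_b·d_b`. -/
def eulerA {r : ℕ} (w : Fin r → ℤ) (x : AA r) : AA r :=
  fun d => scaleL (fun k => (((∑ b, w b * (d b : ℤ)) - 2 * k : ℤ) : ℂ)) (x d)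

/-- The Euler operator acting entrywise on matrices. -/
def eulerMat {r n : ℕ} (w : Fin r → ℤ) (M : Matrix (Fin n) (Fin n) (AA r)) :
    Matrix (Fin n) (Fin n) (AA r) :=
  Matrix.of fun i j => eulerA w (M i j)

/-!
Put `D(M) = E(M) + [μ, M]`. Both `E` and `θ_a` multiply `ħ^j q^d` by a weight that is additive in
`(d, j)`, so they are commuting derivations that kill constants, and `E(ħ) = 2ħ`. Hence `D` is a
derivation of matrices commuting with `θ_a`, with `D(ħM) = ħ D(M) + 2ħM`. The grading says
`D(Ω_a) = 2Ω_a`, and at `q = 0` it gives `[μ, p_a] = 2p_a`, so applying `D` to the equation of `S`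
shows that `T = D(S)` solves the homogeneous equation `ħθ_a T + Ω_a T - T p_a = 0`, with
`T|_{q=0} = [μ, 1] = 0`. Such a `T` vanishes: by induction on `d`, choosing `a` with `d_a ≠ 0`,
the `q^d`-coefficient satisfies `d_a ħ T_d + [p_a, T_d] = 0`, which forces `T_d = 0`. Finally,
`D(S) = 0` says that the coefficient of `ħ^j q^d` in `S` is an eigenvector of `[μ, ·]` with
eigenvalue `-(2j + Σ_b w_b d_b)`, so only finitely many `j` occur.
-/

open Finset

section ScaleL

lemma scaleL_coeff (f : ℤ → ℂ) (x : LS) (k : ℤ) :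
    (scaleL f x).coeff k = f k * x.coeff k := rfl

lemma scaleL_add (f : ℤ → ℂ) (x y : LS) : scaleL f (x + y) = scaleL f x + scaleL f y := by
  ext k; simp [scaleL_coeff, mul_add]

lemma scaleL_zero (f : ℤ → ℂ) : scaleL f 0 = 0 := by
  ext k; simp [scaleL_coeff]

lemma scaleL_C (f : ℤ → ℂ) (hf : f 0 = 0) (z : ℂ) : scaleL f (HahnSeries.C z) = 0 := by
  ext k
  rcases eq_or_ne k 0 with rfl | hk
  · simp [scaleL_coeff, hf]
  · simp [scaleL_coeff, HahnSeries.C_apply, HahnSeries.coeff_single_of_ne hk]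

lemma support_scaleL_subset (f : ℤ → ℂ) (x : LS) : (scaleL f x).support ⊆ x.support :=
  fun k hk h => hk (by rw [scaleL_coeff, h, mul_zero])

lemma scaleL_comm (f g : ℤ → ℂ) (x : LS) : scaleL f (scaleL g x) = scaleL g (scaleL f x) := by
  ext k; simp only [scaleL_coeff]; ring

lemma scaleL_mul {f g h : ℤ → ℂ} (hfgh : ∀ i j, f (i + j) = g i + h j) (x y : LS) :
    scaleL f (x * y) = scaleL g x * y + x * scaleL h y := by
  ext k
  rw [HahnSeries.coeff_add, scaleL_coeff, HahnSeries.coeff_mul,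
    HahnSeries.coeff_mul_left' x.isPWO_support (support_scaleL_subset g x),
    HahnSeries.coeff_mul_right' y.isPWO_support (support_scaleL_subset h y),
    mul_sum, ← sum_add_distrib]
  refine sum_congr rfl fun ij hij => ?_
  rw [scaleL_coeff, scaleL_coeff, ← (Finset.mem_antidiagonal.mp hij).2.2, hfgh]
  ring

end ScaleL

section WeightOp

open MvPowerSeries

variable {r : ℕ}

def weightOp (ω : (Fin r →₀ ℕ) × ℤ →+ ℂ) : AA r →+ AA r where
  toFun x d := scaleL (fun k => ω (d, k)) (x d)
  map_zero' := funext fun _ => scaleL_zero _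
  map_add' x y := funext fun d => scaleL_add _ (x d) (y d)

lemma coeff_weightOp (ω : (Fin r →₀ ℕ) × ℤ →+ ℂ) (x : AA r) (d : Fin r →₀ ℕ) :
    coeff d (weightOp ω x) = scaleL (fun k => ω (d, k)) (coeff d x) := rfl

lemma weightOp_mul (ω : (Fin r →₀ ℕ) × ℤ →+ ℂ) (x y : AA r) :
    weightOp ω (x * y) = weightOp ω x * y + x * weightOp ω y := by
  ext d : 1
  let scale := AddMonoidHom.mk' (scaleL fun k => ω (d, k)) (scaleL_add _)
  rw [coeff_weightOp, coeff_mul, map_add, coeff_mul, coeff_mul, ← sum_add_distrib]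
  refine (map_sum scale _ _).trans (sum_congr rfl fun q hq => ?_)
  refine scaleL_mul (fun i j => ?_) _ _
  rw [← (mem_antidiagonal.mp hq), ← map_add, Prod.mk_add_mk]

lemma weightOp_cA (ω : (Fin r →₀ ℕ) × ℤ →+ ℂ) (z : ℂ) : weightOp ω (cA r z) = 0 := by
  ext d : 1
  rw [coeff_weightOp, cA, RingHom.comp_apply, coeff_C, map_zero]
  split_ifs with hd
  · subst hd
    exact scaleL_C _ (map_zero ω) z
  · exact scaleL_zero _

lemma weightOp_comm (ω ω' : (Fin r →₀ ℕ) × ℤ →+ ℂ) (x : AA r) :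
    weightOp ω (weightOp ω' x) = weightOp ω' (weightOp ω x) :=
  funext fun _ => scaleL_comm _ _ _

def eulerWeight (w : Fin r → ℤ) : (Fin r →₀ ℕ) × ℤ →+ ℂ :=
  AddMonoidHom.mk' (fun dk => (((∑ b, w b * (dk.1 b : ℤ)) - 2 * dk.2 : ℤ) : ℂ)) fun _ _ => by
    simp only [Prod.fst_add, Prod.snd_add, Finsupp.add_apply, Nat.cast_add, mul_add,
      sum_add_distrib]
    push_cast
    ring

def thetaWeight (a : Fin r) : (Fin r →₀ ℕ) × ℤ →+ ℂ :=
  AddMonoidHom.mk' (fun dk => (dk.1 a : ℂ)) fun _ _ => by simp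

lemma eulerA_eq_weightOp (w : Fin r → ℤ) : eulerA w = weightOp (eulerWeight w) := rfl

lemma thetaA_eq_weightOp (a : Fin r) : thetaA a = weightOp (thetaWeight a) := by
  funext x
  ext d : 1
  ext k
  rw [coeff_weightOp, scaleL_coeff]
  show ((d a : LS) * x d).coeff k = _
  rw [← nsmul_eq_mul, HahnSeries.coeff_nsmul, nsmul_eq_mul]
  rfl

lemma eulerA_hbarA (w : Fin r → ℤ) : eulerA w (hbarA r) = 2 * hbarA r := by
  ext d : 1
  ext k
  rw [eulerA_eq_weightOp, coeff_weightOp, scaleL_coeff, hbarA, show (2 : AA r) = C 2 from rfl,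
    ← map_mul, coeff_C, coeff_C]
  split_ifs with hd
  · subst hd
    rcases eq_or_ne k (-1) with rfl | hk
    · simp [hbarL, eulerWeight, two_mul]
    · simp [hbarL, two_mul, HahnSeries.coeff_single_of_ne hk]
  · simp

namespace Matrix

variable {l m o A : Type*} [NonUnitalNonAssocSemiring A]

theorem map_mul_of_leibniz [Fintype m] (δ : A →+ A)
    (hδ : ∀ x y, δ (x * y) = δ x * y + x * δ y) (M : Matrix l m A) (N : Matrix m o A) :
    (M * N).map δ = M.map δ * N + M * N.map δ := by
  ext i j
  simp only [map_apply, mul_apply, add_apply, map_sum, hδ, sum_add_distrib]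

end Matrix

section DegreeOp

variable {r n : ℕ}

lemma eulerMat_eq_map (w : Fin r → ℤ) (M : Matrix (Fin n) (Fin n) (AA r)) :
    eulerMat w M = M.map (weightOp (eulerWeight w)) := rfl

lemma thetaMat_eq_map (a : Fin r) (M : Matrix (Fin n) (Fin n) (AA r)) :
    thetaMat a M = M.map (weightOp (thetaWeight a)) := by
  rw [thetaMat, thetaA_eq_weightOp]; rfl

lemma map_weightOp_smul (ω : (Fin r →₀ ℕ) × ℤ →+ ℂ) (x : AA r)
    (M : Matrix (Fin n) (Fin n) (AA r)) :
    (x • M).map (weightOp ω) = weightOp ω x • M + x • M.map (weightOp ω) := by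
  ext i j
  simp only [Matrix.map_apply, Matrix.smul_apply, Matrix.add_apply, smul_eq_mul, weightOp_mul]

lemma map_weightOp_map_cA (ω : (Fin r →₀ ℕ) × ℤ →+ ℂ) (P : Matrix (Fin n) (Fin n) ℂ) :
    (P.map (cA r)).map (weightOp ω) = 0 := by
  ext i j
  simp [weightOp_cA]

lemma map_weightOp_map_cA_mul (ω : (Fin r →₀ ℕ) × ℤ →+ ℂ) (P : Matrix (Fin n) (Fin n) ℂ)
    (M : Matrix (Fin n) (Fin n) (AA r)) :
    (P.map (cA r) * M).map (weightOp ω) = P.map (cA r) * M.map (weightOp ω) := by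
  rw [Matrix.map_mul_of_leibniz _ (weightOp_mul ω), map_weightOp_map_cA, Matrix.zero_mul,
    zero_add]

lemma map_weightOp_mul_map_cA (ω : (Fin r →₀ ℕ) × ℤ →+ ℂ) (P : Matrix (Fin n) (Fin n) ℂ)
    (M : Matrix (Fin n) (Fin n) (AA r)) :
    (M * P.map (cA r)).map (weightOp ω) = M.map (weightOp ω) * P.map (cA r) := by
  rw [Matrix.map_mul_of_leibniz _ (weightOp_mul ω), map_weightOp_map_cA, Matrix.mul_zero,
    add_zero]

def degreeOp (w : Fin r → ℤ) (μ : Matrix (Fin n) (Fin n) ℂ)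
    (M : Matrix (Fin n) (Fin n) (AA r)) : Matrix (Fin n) (Fin n) (AA r) :=
  eulerMat w M + μ.map (cA r) * M - M * μ.map (cA r)

variable (w : Fin r → ℤ) (μ : Matrix (Fin n) (Fin n) ℂ)

lemma degreeOp_zero : degreeOp w μ (0 : Matrix (Fin n) (Fin n) (AA r)) = 0 := by
  ext i j
  simp [degreeOp, eulerMat_eq_map]

lemma degreeOp_add (M N : Matrix (Fin n) (Fin n) (AA r)) :
    degreeOp w μ (M + N) = degreeOp w μ M + degreeOp w μ N := by
  simp only [degreeOp, eulerMat_eq_map, Matrix.map_add _ (map_add _), Matrix.mul_add,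
    Matrix.add_mul]
  abel

lemma degreeOp_sub (M N : Matrix (Fin n) (Fin n) (AA r)) :
    degreeOp w μ (M - N) = degreeOp w μ M - degreeOp w μ N := by
  simp only [degreeOp, eulerMat_eq_map, Matrix.map_sub _ (map_sub _), Matrix.mul_sub,
    Matrix.sub_mul]
  abel

lemma degreeOp_mul (M N : Matrix (Fin n) (Fin n) (AA r)) :
    degreeOp w μ (M * N) = degreeOp w μ M * N + M * degreeOp w μ N := by
  simp only [degreeOp, eulerMat_eq_map, Matrix.map_mul_of_leibniz _ (weightOp_mul _),
    Matrix.add_mul, Matrix.sub_mul, Matrix.mul_add, Matrix.mul_sub, Matrix.mul_assoc]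
  abel

lemma degreeOp_hbarA_smul (M : Matrix (Fin n) (Fin n) (AA r)) :
    degreeOp w μ (hbarA r • M) = hbarA r • degreeOp w μ M + 2 • hbarA r • M := by
  rw [degreeOp, degreeOp, eulerMat_eq_map, eulerMat_eq_map,
    map_weightOp_smul, ← eulerA_eq_weightOp, eulerA_hbarA,
    -- explicit arguments: `rw` does not unify this `•` (from `Mul`) with the `Module` one
    Matrix.mul_smul (R := AA r) (μ.map (cA r)), Matrix.smul_mul (R := AA r) (hbarA r) M,
    smul_sub (hbarA r) (_ + _ : Matrix (Fin n) (Fin n) (AA r)), smul_add (hbarA r) (M.map _),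
    mul_smul (2 : AA r) (hbarA r) M, two_smul (AA r) (hbarA r • M)]
  abel

lemma degreeOp_thetaMat (a : Fin r) (M : Matrix (Fin n) (Fin n) (AA r)) :
    degreeOp w μ (thetaMat a M) = thetaMat a (degreeOp w μ M) := by
  simp only [degreeOp, eulerMat_eq_map, thetaMat_eq_map, Matrix.map_map,
    Matrix.map_sub _ (map_sub _), Matrix.map_add _ (map_add _), map_weightOp_map_cA_mul,
    map_weightOp_mul_map_cA]
  congr 3
  exact funext fun x => weightOp_comm _ _ x

lemma degreeOp_map_cA (P : Matrix (Fin n) (Fin n) ℂ) :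
    degreeOp w μ (P.map (cA r)) = (μ * P - P * μ).map (cA r) := by
  rw [degreeOp, eulerMat_eq_map, map_weightOp_map_cA, zero_add, Matrix.map_sub _ (map_sub _),
    Matrix.map_mul, Matrix.map_mul]

def connOp (a : Fin r) (Ω : Matrix (Fin n) (Fin n) (AA r)) (P : Matrix (Fin n) (Fin n) ℂ)
    (T : Matrix (Fin n) (Fin n) (AA r)) : Matrix (Fin n) (Fin n) (AA r) :=
  hbarA r • thetaMat a T + Ω * T - T * P.map (cA r)

lemma degreeOp_connOp (a : Fin r) {Ω : Matrix (Fin n) (Fin n) (AA r)}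
    {P : Matrix (Fin n) (Fin n) ℂ} (hΩ : degreeOp w μ Ω = Ω + Ω) (hP : μ * P - P * μ = P + P)
    (T : Matrix (Fin n) (Fin n) (AA r)) :
    degreeOp w μ (connOp a Ω P T) = connOp a Ω P (degreeOp w μ T) + 2 • connOp a Ω P T := by
  have hP' : degreeOp w μ (P.map (cA r)) = P.map (cA r) + P.map (cA r) := by
    rw [degreeOp_map_cA, hP, Matrix.map_add _ (map_add _)]
  rw [connOp, connOp, degreeOp_sub, degreeOp_add, degreeOp_hbarA_smul, degreeOp_thetaMat,
    degreeOp_mul, degreeOp_mul, hΩ, hP']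
  simp only [Matrix.add_mul, Matrix.mul_add]
  abel

end DegreeOp

section Coefficients

open MvPowerSeries

variable {r n : ℕ}

lemma map_coeff_zero (M : Matrix (Fin n) (Fin n) (AA r)) : M.map (coeff 0) = M.map ccA :=
  Matrix.ext fun _ _ => coeff_zero_eq_constantCoeff_apply _

lemma map_coeff_mul (M N : Matrix (Fin n) (Fin n) (AA r)) (d : Fin r →₀ ℕ) :
    (M * N).map (coeff d) =
      ∑ q ∈ antidiagonal d, M.map (coeff q.1) * N.map (coeff q.2) := by
  refine Matrix.ext fun i j => ?_
  simp only [Matrix.map_apply, Matrix.mul_apply, map_sum, coeff_mul, Matrix.sum_apply]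
  exact sum_comm

lemma map_coeff_mul_map_cA (M : Matrix (Fin n) (Fin n) (AA r)) (P : Matrix (Fin n) (Fin n) ℂ)
    (d : Fin r →₀ ℕ) :
    (M * P.map (cA r)).map (coeff d) = M.map (coeff d) * P.map HahnSeries.C := by
  ext i j
  simp [Matrix.mul_apply, cA, coeff_mul_C]

lemma map_coeff_map_cA_mul (P : Matrix (Fin n) (Fin n) ℂ) (M : Matrix (Fin n) (Fin n) (AA r))
    (d : Fin r →₀ ℕ) :
    (P.map (cA r) * M).map (coeff d) = P.map HahnSeries.C * M.map (coeff d) := by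
  ext i j
  simp [Matrix.mul_apply, cA, coeff_C_mul]

lemma map_coeff_connOp (a : Fin r) (Ω : Matrix (Fin n) (Fin n) (AA r))
    (P : Matrix (Fin n) (Fin n) ℂ) (T : Matrix (Fin n) (Fin n) (AA r)) (d : Fin r →₀ ℕ) :
    (connOp a Ω P T).map (coeff d) =
      (HahnSeries.C (d a : ℂ) * hbarL) • T.map (coeff d)
        + ∑ q ∈ antidiagonal d, Ω.map (coeff q.1) * T.map (coeff q.2)
        - T.map (coeff d) * P.map HahnSeries.C := by
  rw [connOp, Matrix.map_sub _ (map_sub _), Matrix.map_add _ (map_add _), map_coeff_mul,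
    map_coeff_mul_map_cA]
  congr 2
  refine Matrix.ext fun i j => ?_
  simp only [Matrix.map_apply, Matrix.smul_apply, smul_eq_mul, hbarA, coeff_C_mul]
  show hbarL * ((d a : LS) * coeff d (T i j)) = _
  rw [map_natCast]
  ring

lemma map_coeff_degreeOp (w : Fin r → ℤ) (μ : Matrix (Fin n) (Fin n) ℂ)
    (M : Matrix (Fin n) (Fin n) (AA r)) (d : Fin r →₀ ℕ) :
    (degreeOp w μ M).map (coeff d) =
      (M.map (coeff d)).map (scaleL fun k => eulerWeight w (d, k))
        + μ.map HahnSeries.C * M.map (coeff d) - M.map (coeff d) * μ.map HahnSeries.C := by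
  rw [degreeOp, Matrix.map_sub _ (map_sub _), Matrix.map_add _ (map_add _),
    map_coeff_mul_map_cA, map_coeff_map_cA_mul]
  rfl

lemma map_ccA_degreeOp (w : Fin r → ℤ) (μ : Matrix (Fin n) (Fin n) ℂ)
    {M : Matrix (Fin n) (Fin n) (AA r)} {Q : Matrix (Fin n) (Fin n) ℂ}
    (hM : M.map ccA = Q.map HahnSeries.C) :
    (degreeOp w μ M).map ccA = (μ * Q - Q * μ).map HahnSeries.C := by
  have hscale : Q.map ((scaleL fun k => eulerWeight w (0, k)) ∘ HahnSeries.C) = 0 :=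
    Matrix.ext fun i j => scaleL_C _ (map_zero (eulerWeight w)) (Q i j)
  rw [← map_coeff_zero, map_coeff_degreeOp, map_coeff_zero, hM, Matrix.map_map, hscale,
    zero_add, Matrix.map_sub _ (map_sub _), Matrix.map_mul, Matrix.map_mul]

end Coefficients

section LaurentMatrix

lemma coeff_hbarL_mul (x : LS) (k : ℤ) : (hbarL * x).coeff k = x.coeff (k + 1) := by
  simpa [hbarL] using
    HahnSeries.coeff_single_mul_add (r := (1 : ℂ)) (x := x) (a := k + 1) (b := -1)

variable {ι : Type*}

lemma map_coeff_C_mul_hbarL_smul (c : ℂ) (X : Matrix ι ι LS) (k : ℤ) :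
    ((HahnSeries.C c * hbarL) • X).map (·.coeff k) = c • X.map (·.coeff (k + 1)) := by
  refine Matrix.ext fun i j => ?_
  show (HahnSeries.C c * hbarL * X i j).coeff k = c * (X i j).coeff (k + 1)
  rw [mul_assoc, HahnSeries.C_mul_eq_smul, HahnSeries.coeff_smul, coeff_hbarL_mul, smul_eq_mul]

lemma map_coeff_map_scaleL (f : ℤ → ℂ) (X : Matrix ι ι LS) (k : ℤ) :
    (X.map (scaleL f)).map (·.coeff k) = f k • X.map (·.coeff k) := rfl

variable [Fintype ι]

lemma map_coeff_map_C_mul (P : Matrix ι ι ℂ) (X : Matrix ι ι LS) (k : ℤ) :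
    (P.map HahnSeries.C * X).map (·.coeff k) = P * X.map (·.coeff k) := by
  refine Matrix.ext fun i j => ?_
  simp [Matrix.mul_apply, HahnSeries.coeff_sum]

lemma map_coeff_mul_map_C (X : Matrix ι ι LS) (P : Matrix ι ι ℂ) (k : ℤ) :
    (X * P.map HahnSeries.C).map (·.coeff k) = X.map (·.coeff k) * P := by
  refine Matrix.ext fun i j => ?_
  simp [Matrix.mul_apply, HahnSeries.coeff_sum, HahnSeries.C_apply]

/-- Comparing coefficients of `ħ^{-k}` gives `c X_{k+1} = [X_k, P]`, so the coefficients of `X`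
vanish from the lowest one upwards. -/
theorem eq_zero_of_hbarL_smul_add_commutator {c : ℂ} (hc : c ≠ 0) (P : Matrix ι ι ℂ)
    {X : Matrix ι ι LS}
    (h : (HahnSeries.C c * hbarL) • X + P.map HahnSeries.C * X - X * P.map HahnSeries.C = 0) :
    X = 0 := by
  have step : ∀ k, X.map (·.coeff k) = 0 → X.map (·.coeff (k + 1)) = 0 := by
    intro k hk
    have hcoeff := congrArg (Matrix.map · (·.coeff k)) h
    simp only [Matrix.map_sub (fun x : LS => x.coeff k) (fun _ _ => HahnSeries.coeff_sub),
      Matrix.map_add (fun x : LS => x.coeff k) (fun _ _ => HahnSeries.coeff_add),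
      map_coeff_C_mul_hbarL_smul, map_coeff_map_C_mul, map_coeff_mul_map_C, hk,
      Matrix.mul_zero, Matrix.zero_mul, add_zero, sub_zero] at hcoeff
    exact (smul_eq_zero.mp hcoeff).resolve_left hc
  obtain ⟨K, hK⟩ := Finite.bddBelow_range fun ij : ι × ι => (X ij.1 ij.2).order
  have low : ∀ k < K, X.map (·.coeff k) = 0 := fun k hk => Matrix.ext fun i j =>
    HahnSeries.coeff_eq_zero_of_lt_order (hk.trans_le (hK ⟨(i, j), rfl⟩))
  have all : ∀ k, X.map (·.coeff k) = 0 := by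
    intro k
    rcases lt_or_ge k K with hk | hk
    · exact low k hk
    induction k, hk using Int.leInduction with
    | base => simpa using step (K - 1) (low (K - 1) (by omega))
    | succ k _ ih => exact step k ih
  exact Matrix.ext fun i j => HahnSeries.ext (funext fun k => congrFun (congrFun (all k) i) j)

end LaurentMatrix

/-- Only finitely many `X k` can be nonzero: each one is an eigenvector of `[μ, ·]`, with
pairwise distinct eigenvalues. -/
theorem finite_setOf_ne_zero_of_commutator_eq_smul {ι α : Type*} [Fintype ι]
    (μ : Matrix ι ι ℂ) {f : α → ℂ} (hf : Function.Injective f) {X : α → Matrix ι ι ℂ}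
    (hX : ∀ k, μ * X k - X k * μ = f k • X k) : {k | X k ≠ 0}.Finite := by
  let adμ : Module.End ℂ (Matrix ι ι ℂ) := LinearMap.mulLeft ℂ μ - LinearMap.mulRight ℂ μ
  refine ((Module.End.finite_hasEigenvalue adμ).preimage hf.injOn).subset fun k hk =>
    Module.End.hasEigenvalue_of_hasEigenvector ⟨Module.End.mem_eigenspace_iff.2 ?_, hk⟩
  exact hX k

section FlatSection

open MvPowerSeries

variable {r n : ℕ}

theorem commutator_eq_of_degreeOp_eq (w : Fin r → ℤ) (μ : Matrix (Fin n) (Fin n) ℂ)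
    {Ω : Matrix (Fin n) (Fin n) (AA r)} {P : Matrix (Fin n) (Fin n) ℂ}
    (hΩ : degreeOp w μ Ω = Ω + Ω) (hP : Ω.map ccA = P.map HahnSeries.C) :
    μ * P - P * μ = P + P := by
  apply Matrix.map_injective (HahnSeries.C_injective (Γ := ℤ) (R := ℂ))
  have h := congrArg (Matrix.map · ccA) hΩ
  simp only [map_ccA_degreeOp w μ hP, Matrix.map_add _ (map_add _), hP] at h
  exact h.trans (Matrix.map_add _ (map_add _) P P).symm

theorem eq_zero_of_connOp_eq_zero {Ω : Fin r → Matrix (Fin n) (Fin n) (AA r)}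
    {p : Fin r → Matrix (Fin n) (Fin n) ℂ} (hp : ∀ a, (Ω a).map ccA = (p a).map HahnSeries.C)
    {T : Matrix (Fin n) (Fin n) (AA r)} (hT0 : T.map ccA = 0)
    (hT : ∀ a, connOp a (Ω a) (p a) T = 0) : T = 0 := by
  suffices h : ∀ d, T.map (coeff d) = 0 from
    Matrix.ext fun i j => MvPowerSeries.ext fun d => congrFun (congrFun (h d) i) j
  intro d
  induction d using WellFoundedLT.induction with
  | _ d ih =>
    rcases eq_or_ne d 0 with rfl | hd
    · rwa [map_coeff_zero]
    obtain ⟨a, ha⟩ : ∃ a, d a ≠ 0 := by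
      by_contra! h
      exact hd (Finsupp.ext h)
    have h := congrArg (Matrix.map · (coeff d)) (hT a)
    rw [map_coeff_connOp, Matrix.map_zero _ (map_zero _),
      sum_eq_single_of_mem (0, d) (mem_antidiagonal.mpr (zero_add d)), map_coeff_zero, hp a] at h
    · exact eq_zero_of_hbarL_smul_add_commutator (Nat.cast_ne_zero.mpr ha) (p a) h
    rintro ⟨q₁, q₂⟩ hq hne
    have hq₂ : q₂ < d := by
      refine lt_of_le_of_ne ((mem_antidiagonal.mp hq) ▸ le_add_self) fun hq₂ => hne ?_
      subst hq₂
      simpa using mem_antidiagonal.mp hq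
    rw [ih q₂ hq₂, Matrix.mul_zero]

theorem support_finite_of_degreeOp_eq_zero (w : Fin r → ℤ) (μ : Matrix (Fin n) (Fin n) ℂ)
    {S : Matrix (Fin n) (Fin n) (AA r)} (hS : degreeOp w μ S = 0) (i j : Fin n)
    (d : Fin r →₀ ℕ) : (S i j d).support.Finite := by
  set Y : ℤ → Matrix (Fin n) (Fin n) ℂ := fun k => (S.map (coeff d)).map (·.coeff k)
  have hY : ∀ k, μ * Y k - Y k * μ = -eulerWeight w (d, k) • Y k := fun k => by
    have h := congrArg (fun M => (M.map (coeff d)).map (·.coeff k)) hS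
    simp only [map_coeff_degreeOp,
      Matrix.map_sub (fun x : LS => x.coeff k) (fun _ _ => HahnSeries.coeff_sub),
      Matrix.map_add (fun x : LS => x.coeff k) (fun _ _ => HahnSeries.coeff_add),
      map_coeff_map_C_mul, map_coeff_mul_map_C, map_coeff_map_scaleL,
      Matrix.map_zero _ (map_zero _)] at h
    rw [neg_smul, eq_neg_iff_add_eq_zero, add_comm, ← add_sub_assoc]
    exact h
  have hinj : Function.Injective fun k => -eulerWeight w (d, k) := fun k l hkl => by
    simpa [eulerWeight] using hkl
  refine (finite_setOf_ne_zero_of_commutator_eq_smul μ hinj hY).subset fun k hk hYk => hk ?_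
  exact congrFun (congrFun hYk i) j

end FlatSection

theorem flat_section_graded_general {r n : ℕ}
    (Ω : Fin r → Matrix (Fin n) (Fin n) (AA r))
    (p : Fin r → Matrix (Fin n) (Fin n) ℂ)
    (hp : ∀ a i j, ccA (Ω a i j) = HahnSeries.C (p a i j))
    (μ : Matrix (Fin n) (Fin n) ℂ) (w : Fin r → ℤ)
    (hgrade : ∀ a, eulerMat w (Ω a) + μ.map (cA r) * Ω a - Ω a * μ.map (cA r)
      = Ω a + Ω a)
    (S : Matrix (Fin n) (Fin n) (AA r))
    (hScc : S.map ccA = 1)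
    (hSeq : ∀ a, hbarA r • thetaMat a S + Ω a * S - S * (p a).map (cA r) = 0) :
    eulerMat w S + μ.map (cA r) * S - S * μ.map (cA r) = 0 ∧
    ∀ i j d, ((S i j d).support).Finite := by
  have hp' : ∀ a, (Ω a).map ccA = (p a).map HahnSeries.C := fun a => Matrix.ext (hp a)
  have hcomm : ∀ a, μ * p a - p a * μ = p a + p a := fun a =>
    commutator_eq_of_degreeOp_eq w μ (hgrade a) (hp' a)
  have hT : ∀ a, connOp a (Ω a) (p a) (degreeOp w μ S) = 0 := fun a => by
    have h := degreeOp_connOp w μ a (hgrade a) (hcomm a) S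
    rw [show connOp a (Ω a) (p a) S = 0 from hSeq a, degreeOp_zero] at h
    simpa using h.symm
  have hT0 : (degreeOp w μ S).map ccA = 0 := by
    rw [map_ccA_degreeOp w μ
      (hScc.trans (Matrix.map_one _ (map_zero _) (map_one _)).symm)]
    simp
  have hS : degreeOp w μ S = 0 := eq_zero_of_connOp_eq_zero hp' hT0 hT
  exact ⟨hS, support_finite_of_degreeOp_eq_zero w μ hS⟩

/-- **The flat section in the graded case** (graded Proposition of §3.3).
If the flat connection matrices `Ω_a ∈ Mat_n(ℂ[ħ][[q]])` (with `Ω_a|_{q=0}`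
independent of `ħ`) have degree 2, i.e. `E(Ω_a) + [μ, Ω_a] = 2Ω_a` for the
Euler operator `E = 2ħ∂/∂ħ + Σ_b w_b θ_b` and a degree matrix `μ ∈ Mat_n(ℂ)`,
then the unique flat section `S` (with `S|_{q=0} = Id` and
`ħθ_a S + Ω_a S − S p_a = 0`) satisfies `E(S) + [μ, S] = 0`, and each
`q`-coefficient of `S` is a Laurent polynomial in `ħ`. -/
theorem flat_section_graded {r n : ℕ} (hr : 1 ≤ r) (hn : 1 ≤ n)
    (Ω : Fin r → Matrix (Fin n) (Fin n) (AA r))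
    (hpoly : ∀ a, MatPolyH (Ω a))
    (hflat : IsFlat Ω)
    (p : Fin r → Matrix (Fin n) (Fin n) ℂ)
    (hp : ∀ a i j, ccA (Ω a i j) = HahnSeries.C (p a i j))
    (μ : Matrix (Fin n) (Fin n) ℂ) (w : Fin r → ℤ)
    (hgrade : ∀ a, eulerMat w (Ω a) + μ.map (cA r) * Ω a - Ω a * μ.map (cA r)
      = Ω a + Ω a)
    (S : Matrix (Fin n) (Fin n) (AA r))
    (hScc : S.map ccA = 1)
    (hSeq : ∀ a, hbarA r • thetaMat a S + Ω a * S - S * (p a).map (cA r) = 0) :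
    eulerMat w S + μ.map (cA r) * S - S * μ.map (cA r) = 0 ∧
    ∀ i j d, ((S i j d).support).Finite :=
  flat_section_graded_general Ω p hp μ w hgrade S hScc hSeq
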